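/- There exists a real symmetric matrix A with 0 ⪯ A ⪯ I and a symmetric positive definite Σ such that if Z₁, Z₂ are independent N(0,Σ), the vector (I−A)^{1/2}·Z₁ + A^{1/2}·Z₂ is NOT distributed N(0,Σ); equivalently, (I−A)^{1/2}·Σ·(I−A)^{1/2} + A^{1/2}·Σ·A^{1/2} ≠ Σ. -/

import Mathlib

/-!
If `Z₁ ~ N(0, S)` and `Z₂ ~ N(0, T)` are independent, the coordinate covariances of
`P Z₁ + Q Z₂` are the entries of `P S Pᵀ + Q T Qᵀ` (the cross terms vanish by independence),
while those of `N(0, U)` are the entries of `U`. So equality of the laws forces the covariance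
identity, and it suffices to break the latter. For `A = diag(1, 0)` both `A` and `I - A` are
orthogonal projections, hence their own square roots, and the off-diagonal entry of
`(I - A) Σ (I - A) + A Σ A` is `0`, whereas `Σ = !![2, 1; 1, 2]` has off-diagonal entry `1`.
-/

open Matrix MeasureTheory ProbabilityTheory

/-- The positive semidefinite square root of a positive semidefinite matrix
(removed from Mathlib; restated with its former definition). -/
noncomputable def Matrix.PosSemidef.sqrt {n : Type*} [Fintype n] [DecidableEq n]
    {A : Matrix n n ℝ} (hA : A.PosSemidef) : Matrix n n ℝ :=
  (hA.1.eigenvectorUnitary : Matrix n n ℝ) * diagonal (Real.sqrt ∘ hA.1.eigenvalues) *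
    (star hA.1.eigenvectorUnitary : Matrix n n ℝ)

/-- The centered Gaussian measure on `Fin n → ℝ` with covariance matrix `S`,
realized as the pushforward of the standard Gaussian by `S^{1/2}`. -/
noncomputable def gaussianVec {n : ℕ} (S : Matrix (Fin n) (Fin n) ℝ)
    (hS : S.PosSemidef) : Measure (Fin n → ℝ) :=
  Measure.map (fun x => hS.sqrt.mulVec x)
    (Measure.pi fun _ => gaussianReal 0 1)
open scoped MatrixOrder

theorem Matrix.dotProduct_mulVec_eq_mul_mul_transpose {m n R : Type*} [Fintype m] [Fintype n]
    [NonUnitalSemiring R] (P : Matrix m n R) (S : Matrix n n R) (i j : m) :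
    P i ⬝ᵥ S *ᵥ P j = (P * S * Pᵀ) i j :=
  dotProduct_mulVec _ _ _

theorem dotProduct_comp_ofLp {n : Type*} [Fintype n] (u : n → ℝ) :
    (u ⬝ᵥ ·) ∘ WithLp.ofLp (p := 2) =
      (inner ℝ (WithLp.toLp 2 u) : EuclideanSpace ℝ n → ℝ) := by
  ext x
  simp [PiLp.inner_apply, dotProduct, mul_comm]

namespace Matrix.PosSemidef

variable {n : Type*} [Fintype n] [DecidableEq n] {A : Matrix n n ℝ}

theorem sqrt_eq_cfcSqrt (hA : A.PosSemidef) : hA.sqrt = CFC.sqrt A := by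
  rw [CFC.sqrt_eq_real_sqrt A hA.nonneg, cfcₙ_eq_cfc, hA.1.cfc_eq, IsHermitian.cfc,
    Unitary.conjStarAlgAut_apply, PosSemidef.sqrt]
  rfl

theorem transpose_sqrt (hA : A.PosSemidef) : hA.sqrtᵀ = hA.sqrt := by
  rw [hA.sqrt_eq_cfcSqrt, ← conjTranspose_eq_transpose_of_trivial]
  exact (CFC.sqrt_nonneg A).isSelfAdjoint

theorem sqrt_eq_self (hA : A.PosSemidef) (h : IsIdempotentElem A) : hA.sqrt = A := by
  rw [hA.sqrt_eq_cfcSqrt]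
  exact CFC.sqrt_unique h hA.nonneg

end Matrix.PosSemidef

section Prod

variable {α β : Type*} {mα : MeasurableSpace α} {mβ : MeasurableSpace β}
  {μ : Measure α} {ν : Measure β}

theorem covariance_comp_fst_prod [IsProbabilityMeasure ν] {X X' : α → ℝ}
    (hX : AEStronglyMeasurable X μ) (hX' : AEStronglyMeasurable X' μ) :
    cov[fun p ↦ X p.1, fun p ↦ X' p.1; μ.prod ν] = cov[X, X'; μ] := by
  have hfst := (measurePreserving_fst (μ := μ) (ν := ν)).map_eq
  rw [← covariance_map_fun (by rwa [hfst]) (by rwa [hfst]) measurable_fst.aemeasurable, hfst]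

theorem covariance_comp_snd_prod [IsProbabilityMeasure μ] [SFinite ν] {Y Y' : β → ℝ}
    (hY : AEStronglyMeasurable Y ν) (hY' : AEStronglyMeasurable Y' ν) :
    cov[fun p ↦ Y p.2, fun p ↦ Y' p.2; μ.prod ν] = cov[Y, Y'; ν] := by
  have hsnd := (measurePreserving_snd (μ := μ) (ν := ν)).map_eq
  rw [← covariance_map_fun (by rwa [hsnd]) (by rwa [hsnd]) measurable_snd.aemeasurable, hsnd]

theorem covariance_add_prod [IsProbabilityMeasure μ] [IsProbabilityMeasure ν]
    {X X' : α → ℝ} {Y Y' : β → ℝ} (hX : MemLp X 2 μ) (hX' : MemLp X' 2 μ)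
    (hY : MemLp Y 2 ν) (hY' : MemLp Y' 2 ν) :
    cov[fun p ↦ X p.1 + Y p.2, fun p ↦ X' p.1 + Y' p.2; μ.prod ν] =
      cov[X, X'; μ] + cov[Y, Y'; ν] := by
  have hX₁ := hX.comp_fst ν
  have hX'₁ := hX'.comp_fst ν
  have hY₂ := hY.comp_snd μ
  have hY'₂ := hY'.comp_snd μ
  have hXY' : cov[fun p ↦ X p.1, fun p ↦ Y' p.2; μ.prod ν] = 0 :=
    (indepFun_prod₀ hX.aemeasurable hY'.aemeasurable).covariance_eq_zero hX₁ hY'₂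
  have hYX' : cov[fun p ↦ Y p.2, fun p ↦ X' p.1; μ.prod ν] = 0 :=
    (indepFun_prod₀ hX'.aemeasurable hY.aemeasurable).symm.covariance_eq_zero hY₂ hX'₁
  change cov[(fun p ↦ X p.1) + (fun p ↦ Y p.2), (fun p ↦ X' p.1) + (fun p ↦ Y' p.2);
    μ.prod ν] = _
  rw [covariance_add_left hX₁ hY₂ (hX'₁.add hY'₂), covariance_add_right hX₁ hX'₁ hY'₂,
    covariance_add_right hY₂ hX'₁ hY'₂, hXY', hYX', covariance_comp_fst_prod hX.1 hX'.1,
    covariance_comp_snd_prod hY.1 hY'.1, add_zero, zero_add]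

end Prod

section gaussianVec

variable {n : ℕ} {S : Matrix (Fin n) (Fin n) ℝ}

theorem gaussianVec_eq_map_ofLp (hS : S.PosSemidef) :
    gaussianVec S hS = (multivariateGaussian 0 S).map (WithLp.ofLp (p := 2)) := by
  rw [multivariateGaussian, ← map_pi_eq_stdGaussian, Measure.map_map (by fun_prop) (by fun_prop),
    Measure.map_map (by fun_prop) (by fun_prop), gaussianVec, hS.sqrt_eq_cfcSqrt]
  congr 1
  ext x i
  simp

instance isProbabilityMeasure_gaussianVec (hS : S.PosSemidef) :
    IsProbabilityMeasure (gaussianVec S hS) := by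
  rw [gaussianVec_eq_map_ofLp]
  exact Measure.isProbabilityMeasure_map (by fun_prop)

theorem memLp_dotProduct_gaussianVec (hS : S.PosSemidef) (u : Fin n → ℝ) :
    MemLp (u ⬝ᵥ ·) 2 (gaussianVec S hS) := by
  rw [gaussianVec_eq_map_ofLp, memLp_map_measure_iff (by fun_prop) (by fun_prop),
    dotProduct_comp_ofLp]
  exact IsGaussian.memLp_dual _ (innerSL ℝ _) 2 (by norm_num)

theorem covariance_dotProduct_gaussianVec (hS : S.PosSemidef) (u v : Fin n → ℝ) :
    cov[(u ⬝ᵥ ·), (v ⬝ᵥ ·); gaussianVec S hS] = u ⬝ᵥ S *ᵥ v := by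
  rw [gaussianVec_eq_map_ofLp, covariance_map (by fun_prop) (by fun_prop) (by fun_prop),
    dotProduct_comp_ofLp, dotProduct_comp_ofLp,
    ← covarianceBilin_apply_eq_cov IsGaussian.memLp_two_id,
    covarianceBilin_multivariateGaussian hS]

theorem covariance_eval_gaussianVec (hS : S.PosSemidef) (i j : Fin n) :
    cov[fun x ↦ x i, fun x ↦ x j; gaussianVec S hS] = S i j := by
  simpa using covariance_dotProduct_gaussianVec hS (Pi.single i 1) (Pi.single j 1)

variable {T : Matrix (Fin n) (Fin n) ℝ}

theorem covariance_eval_map_mulVec_add_mulVec_prod (hS : S.PosSemidef) (hT : T.PosSemidef)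
    (P Q : Matrix (Fin n) (Fin n) ℝ) (i j : Fin n) :
    cov[fun x ↦ x i, fun x ↦ x j;
      ((gaussianVec S hS).prod (gaussianVec T hT)).map (fun p ↦ P *ᵥ p.1 + Q *ᵥ p.2)] =
      (P * S * Pᵀ + Q * T * Qᵀ) i j := by
  rw [covariance_map_fun (measurable_pi_apply i).aestronglyMeasurable
    (measurable_pi_apply j).aestronglyMeasurable (by fun_prop)]
  simp only [Pi.add_apply, mulVec]
  rw [covariance_add_prod (memLp_dotProduct_gaussianVec hS _) (memLp_dotProduct_gaussianVec hS _)
    (memLp_dotProduct_gaussianVec hT _) (memLp_dotProduct_gaussianVec hT _),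
    covariance_dotProduct_gaussianVec, covariance_dotProduct_gaussianVec]
  exact congrArg₂ (· + ·) (P.dotProduct_mulVec_eq_mul_mul_transpose S i j)
    (Q.dotProduct_mulVec_eq_mul_mul_transpose T i j)

theorem mul_mul_transpose_add_eq_of_map_prod_gaussianVec_eq (hS : S.PosSemidef)
    (hT : T.PosSemidef) {U : Matrix (Fin n) (Fin n) ℝ} (hU : U.PosSemidef)
    {P Q : Matrix (Fin n) (Fin n) ℝ}
    (h : ((gaussianVec S hS).prod (gaussianVec T hT)).map (fun p ↦ P *ᵥ p.1 + Q *ᵥ p.2) =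
      gaussianVec U hU) :
    P * S * Pᵀ + Q * T * Qᵀ = U := by
  ext i j
  rw [← covariance_eval_gaussianVec hU, ← h, covariance_eval_map_mulVec_add_mulVec_prod]

end gaussianVec

theorem posDef_two_one_one_two : (!![2, 1; 1, 2] : Matrix (Fin 2) (Fin 2) ℝ).PosDef := by
  have h : (!![2, 1; 1, 2] : Matrix (Fin 2) (Fin 2) ℝ) = 1 + vecMulVec ![1, 1] ![1, 1] := by
    ext i j
    fin_cases i <;> fin_cases j <;> simp [vecMulVec] <;> norm_num
  rw [h]
  exact PosDef.one.add_posSemidef (by simpa using posSemidef_vecMulVec_self_star ![(1 : ℝ), 1])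

theorem stmt_16 :
    ∃ (n : ℕ) (A S : Matrix (Fin n) (Fin n) ℝ) (hA : A.PosSemidef)
      (hAI : (1 - A).PosSemidef) (hS : S.PosDef),
      Measure.map
          (fun p : (Fin n → ℝ) × (Fin n → ℝ) =>
            hAI.sqrt.mulVec p.1 + hA.sqrt.mulVec p.2)
          ((gaussianVec S hS.posSemidef).prod (gaussianVec S hS.posSemidef)) ≠
        gaussianVec S hS.posSemidef ∧
      hAI.sqrt * S * hAI.sqrt + hA.sqrt * S * hA.sqrt ≠ S := by
  set A : Matrix (Fin 2) (Fin 2) ℝ := diagonal ![1, 0]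
  set S : Matrix (Fin 2) (Fin 2) ℝ := !![2, 1; 1, 2]
  have hA : A.PosSemidef := posSemidef_diagonal_iff.mpr fun i ↦ by fin_cases i <;> norm_num
  have hAI : (1 - A).PosSemidef := by
    rw [← diagonal_one, diagonal_sub]
    exact posSemidef_diagonal_iff.mpr fun i ↦ by fin_cases i <;> norm_num
  have hA_idem : IsIdempotentElem A := by
    ext i j
    fin_cases i <;> fin_cases j <;> simp [A]
  have hS := posDef_two_one_one_two
  have hcov : hAI.sqrt * S * hAI.sqrt + hA.sqrt * S * hA.sqrt ≠ S := by
    rw [hAI.sqrt_eq_self hA_idem.one_sub, hA.sqrt_eq_self hA_idem]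
    intro h
    simpa [A, S, mul_apply, Fin.sum_univ_two] using congrFun (congrFun h 0) 1
  refine ⟨2, A, S, hA, hAI, hS, fun hlaw ↦ hcov ?_, hcov⟩
  simpa only [PosSemidef.transpose_sqrt] using
    mul_mul_transpose_add_eq_of_map_prod_gaussianVec_eq _ _ _ hlaw
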